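/- arXiv:cs/0512070 — 4 statements merged into one kernel-verified Lean document; each statement's English description precedes it below -/
import Mathlib

section
/- If α is a Pythagorean angle, i.e. cos α = a/c and sin α = b/c for a primitive Pythagorean triple (a,b,c) with a²+b²=c² and gcd(a,b,c)=1, then α is not a hinge angle: there is no Gaussian integer z = p+qi and integer k with p·cos α − q·sin α = k + 1/2. -/
/-!
Writing `p cos α - q sin α = (p a - q b) / c`, the claim says that a fraction with odd denominator
is never a half-integer: `2 (p a - q b) = (2 k + 1) c` has an even left side and an odd right side.
The hypotenuse `c` is odd because an even `c` forces `a` and `b` to be even (squares mod 4),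
contradicting primitivity.
-/

theorem Int.even_and_even_of_sq_add_sq_eq_sq {a b c : ℤ} (h : a ^ 2 + b ^ 2 = c ^ 2)
    (hc : Even c) : Even a ∧ Even b := by
  have hsame : Even a ↔ Even b := by
    have : Even (a ^ 2 + b ^ 2) := h ▸ (Int.even_pow' two_ne_zero).mpr hc
    simpa [Int.even_add, Int.even_pow] using this
  by_contra hab
  have ha : Odd a := Int.not_even_iff_odd.mp fun ha => hab ⟨ha, hsame.mp ha⟩
  have hb : Odd b := Int.not_even_iff_odd.mp fun hb => hab ⟨hsame.mpr hb, hb⟩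
  obtain ⟨z, rfl⟩ := hc
  -- odd squares are `1 mod 4`, so `a ^ 2 + b ^ 2 ≡ 2 mod 4`, while `(2 z) ^ 2 ≡ 0 mod 4`
  have h4 := congrArg (· % 4) h
  simp only [Int.add_emod (a ^ 2), Int.sq_mod_four_eq_one_of_odd ha,
    Int.sq_mod_four_eq_one_of_odd hb] at h4
  have : (z + z) ^ 2 = 4 * z ^ 2 := by ring
  omega

theorem Int.odd_of_sq_add_sq_eq_sq {a b c : ℤ} (h : a ^ 2 + b ^ 2 = c ^ 2)
    (hprim : Int.gcd a (Int.gcd b c) = 1) : Odd c := by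
  by_contra hc
  rw [Int.not_odd_iff_even] at hc
  obtain ⟨ha, hb⟩ := Int.even_and_even_of_sq_add_sq_eq_sq h hc
  have h2 : 2 ∣ Int.gcd a (Int.gcd b c) :=
    Int.dvd_gcd (c := 2) ha.two_dvd (Int.dvd_coe_gcd hb.two_dvd hc.two_dvd)
  rw [hprim] at h2
  norm_num at h2

theorem Int.cast_div_ne_add_half_of_odd {n c : ℤ} (hc : Odd c) (k : ℤ) :
    (n : ℝ) / c ≠ k + 1 / 2 := by
  intro h
  have hc0 : (c : ℝ) ≠ 0 := Int.cast_ne_zero.mpr fun h0 => by simp [h0] at hc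
  have hint : 2 * n = (2 * k + 1) * c := by
    field_simp at h
    exact_mod_cast (by linarith : (2 * n : ℝ) = (2 * k + 1) * c)
  exact Int.not_even_iff_odd.mpr ((odd_two_mul_add_one k).mul hc) (hint ▸ even_two_mul n)

theorem pythagorean_not_hinge_general (α : ℝ) (a b c : ℤ)
    (htriple : a ^ 2 + b ^ 2 = c ^ 2)
    (hprim : Int.gcd a (Int.gcd b c) = 1)
    (hcos : Real.cos α = (a : ℝ) / c) (hsin : Real.sin α = (b : ℝ) / c) :
    ¬ ∃ p q k : ℤ, (p : ℝ) * Real.cos α - (q : ℝ) * Real.sin α = (k : ℝ) + 1 / 2 := by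
  rintro ⟨p, q, k, h⟩
  have hquot : (p : ℝ) * Real.cos α - q * Real.sin α = ((p * a - q * b : ℤ) : ℝ) / c := by
    rw [hcos, hsin]
    push_cast
    ring
  exact Int.cast_div_ne_add_half_of_odd (Int.odd_of_sq_add_sq_eq_sq htriple hprim) k (hquot ▸ h)

/-- A Pythagorean angle (cos α = a/c, sin α = b/c for a primitive
Pythagorean triple) is not a hinge angle. -/
theorem pythagorean_not_hinge (α : ℝ) (a b c : ℤ) (hc : 0 < c)
    (htriple : a ^ 2 + b ^ 2 = c ^ 2)
    (hprim : Int.gcd a (Int.gcd b c) = 1)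
    (hcos : Real.cos α = (a : ℝ) / c) (hsin : Real.sin α = (b : ℝ) / c) :
    ¬ ∃ p q k : ℤ, (p : ℝ) * Real.cos α - (q : ℝ) * Real.sin α = (k : ℝ) + 1 / 2 :=
  pythagorean_not_hinge_general α a b c htriple hprim hcos hsin
end

section
/- If α is a hinge angle, then at least one of cos α and sin α is irrational. -/
/-!
If `cos α = x / z` and `sin α = y / z` with `z` odd, the hinge equation becomes
`2 (q x + p y) = (2 k + 1) z`, equating an even and an odd integer. Such a representation exists
for every rational point on the unit circle: clearing denominators gives a Pythagorean triple,
and while its hypotenuse is even so are both legs (squares are `0` or `1` mod `4`), so the whole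
triple can be halved.
-/

namespace PythagoreanTriple

theorem even_legs_of_even_hypotenuse {x y z : ℤ} (h : PythagoreanTriple x y z) (hz : Even z) :
    Even x ∧ Even y := by
  obtain ⟨c, rfl⟩ := hz
  rcases Int.even_or_odd' x with ⟨m, rfl | rfl⟩ <;>
    rcases Int.even_or_odd' y with ⟨n, rfl | rfl⟩ <;>
    simp only [PythagoreanTriple] at h
  · exact ⟨⟨m, two_mul m⟩, ⟨n, two_mul n⟩⟩
  all_goals ring_nf at h; omega

theorem exists_two_pow_mul_odd_hypotenuse {x y z : ℤ} (h : PythagoreanTriple x y z)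
    (hz : z ≠ 0) :
    ∃ (n : ℕ) (x' y' z' : ℤ), PythagoreanTriple x' y' z' ∧ Odd z' ∧
      x = 2 ^ n * x' ∧ y = 2 ^ n * y' ∧ z = 2 ^ n * z' := by
  rcases Int.even_or_odd z with heven | hodd
  · obtain ⟨⟨a, rfl⟩, ⟨b, rfl⟩⟩ := h.even_legs_of_even_hypotenuse heven
    obtain ⟨c, rfl⟩ := heven
    have hc : PythagoreanTriple a b c :=
      (mul_iff 2 two_ne_zero).1 (by convert h using 1 <;> ring)
    obtain ⟨n, x', y', z', ht, hodd, rfl, rfl, rfl⟩ :=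
      exists_two_pow_mul_odd_hypotenuse hc (by omega)
    exact ⟨n + 1, x', y', z', ht, hodd, by ring, by ring, by ring⟩
  · exact ⟨0, x, y, z, h, hodd, by simp, by simp, by simp⟩
termination_by z.natAbs
decreasing_by omega

end PythagoreanTriple

theorem Rat.exists_eq_div_odd_of_sq_add_sq_eq_one {a b : ℚ} (h : a ^ 2 + b ^ 2 = 1) :
    ∃ x y z : ℤ, Odd z ∧ a = x / z ∧ b = y / z := by
  set z : ℤ := a.den * b.den
  have hz : (z : ℚ) ≠ 0 := by positivity
  have hx : ((a.num * b.den : ℤ) : ℚ) = a * z := by push_cast [z, ← Rat.mul_den_eq_num]; ring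
  have hy : ((b.num * a.den : ℤ) : ℚ) = b * z := by push_cast [z, ← Rat.mul_den_eq_num]; ring
  have ht : PythagoreanTriple (a.num * b.den) (b.num * a.den) z := by
    rw [PythagoreanTriple, ← Int.cast_inj (α := ℚ)]
    push_cast [hx, hy]
    linear_combination (z : ℚ) ^ 2 * h
  obtain ⟨n, x, y, z', -, hodd, hxn, hyn, hzn⟩ :=
    ht.exists_two_pow_mul_odd_hypotenuse (by positivity)
  have h2n : (2 : ℚ) ^ n ≠ 0 := by positivity
  refine ⟨x, y, z', hodd, ?_, ?_⟩
  · rw [← mul_div_cancel_right₀ a hz, ← hx, hxn, hzn]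
    push_cast
    exact mul_div_mul_left _ _ h2n
  · rw [← mul_div_cancel_right₀ b hz, ← hy, hyn, hzn]
    push_cast
    exact mul_div_mul_left _ _ h2n

/-- If α is a hinge angle, then cos α or sin α is irrational. -/
theorem hinge_irrational (α : ℝ)
    (h : ∃ p q k : ℤ,
      2 * (q : ℝ) * Real.cos α + 2 * (p : ℝ) * Real.sin α = 2 * (k : ℝ) + 1) :
    Irrational (Real.cos α) ∨ Irrational (Real.sin α) := by
  obtain ⟨p, q, k, hinge⟩ := h
  by_contra! hrat
  simp only [Irrational, not_not, Set.mem_range] at hrat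
  obtain ⟨⟨a, ha⟩, ⟨b, hb⟩⟩ := hrat
  have hab : a ^ 2 + b ^ 2 = 1 := by exact_mod_cast ha ▸ hb ▸ Real.cos_sq_add_sin_sq α
  obtain ⟨x, y, z, hz, rfl, rfl⟩ := Rat.exists_eq_div_odd_of_sq_add_sq_eq_one hab
  have hz0 : (z : ℝ) ≠ 0 := Int.cast_ne_zero.2 (by rintro rfl; simp at hz)
  have heq : 2 * (q * x + p * y) = (2 * k + 1) * z := by
    rw [← ha, ← hb] at hinge
    push_cast at hinge
    field_simp at hinge
    exact_mod_cast (show (2 * (q * x + p * y) : ℝ) = (2 * k + 1) * z by linear_combination hinge)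
  exact Int.not_even_iff_odd.2 ((odd_two_mul_add_one k).mul hz) (heq ▸ even_two_mul _)
end

section
/- Let (p,q,k) and (p',q',k') be two triples of integers generating the same hinge angle α, i.e. 2p sin α + 2q cos α = 2k+1 and 2p' sin α + 2q' cos α = 2k'+1, where α is not Pythagorean (cos α and sin α are not both rational). Then p·q' − q·p' = 0. -/
lemma not_irr_of_eq_int_div (n d : ℤ) (x : ℝ) (hx : x = (n : ℝ) / (d : ℝ)) :
    ¬ Irrational x := by
  rw [hx]
  have : ((n : ℝ) / (d : ℝ)) = ((n / d : ℚ) : ℝ) := by push_cast; ring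
  rw [this]
  exact Rat.not_irrational _

/-- Two generating triples of the same non-Pythagorean hinge angle
have colinear (p,q) parts. -/
theorem generating_triples_colinear (α : ℝ) (p q k p' q' k' : ℤ)
    (hirr : Irrational (Real.cos α) ∨ Irrational (Real.sin α))
    (h : 2 * (p : ℝ) * Real.sin α + 2 * (q : ℝ) * Real.cos α = 2 * (k : ℝ) + 1)
    (h' : 2 * (p' : ℝ) * Real.sin α + 2 * (q' : ℝ) * Real.cos α = 2 * (k' : ℝ) + 1) :
    p * q' - q * p' = 0 := by
  by_contra hd
  have hD : ((p * q' - q * p' : ℤ) : ℝ) ≠ 0 := by exact_mod_cast hd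
  have hD2 : (2 * ((p * q' - q * p' : ℤ) : ℝ)) ≠ 0 := by
    intro hc; apply hD; linarith
  have hs : Real.sin α =
      (((2*k+1)*q' - (2*k'+1)*q : ℤ) : ℝ) / ((2*(p*q'-q*p') : ℤ) : ℝ) := by
    rw [eq_div_iff (by exact_mod_cast hD2)]
    push_cast
    linear_combination (q' : ℝ) * h - (q : ℝ) * h'
  have hc : Real.cos α =
      (((2*k'+1)*p - (2*k+1)*p' : ℤ) : ℝ) / ((2*(p*q'-q*p') : ℤ) : ℝ) := by
    rw [eq_div_iff (by exact_mod_cast hD2)]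
    push_cast
    linear_combination (p : ℝ) * h' - (p' : ℝ) * h
  rcases hirr with hi | hi
  · exact not_irr_of_eq_int_div _ _ _ hc hi
  · exact not_irr_of_eq_int_div _ _ _ hs hi
end

section
/- Let (p,q,k) be a primary generating triple of a hinge angle α (one with p²+q² minimal among generating triples of α). Then the set of all generating triples of α equals { ((2n+1)p, (2n+1)q, (2n+1)k + n) : n ∈ ℤ }. -/
/-!
Two generating triples `(p, q, k)`, `(p', q', k')` of `α` have colinear vectors: otherwise
`sin α` and `cos α` are ratios `X / 2D`, `Y / 2D` with `X² + Y² = 4D²` and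
`pX + qY = (2k + 1) D`, which is impossible by descent on the power of `2` dividing `D`.
Colinearity makes `(p', q') (2k + 1) = (p, q) (2k' + 1)`. Integer combinations of generating
triples with odd value are again generating triples; the Bézout combination realising
`g = gcd (2k + 1, 2k' + 1)` has vector `(g / (2k + 1)) (p, q)`, so minimality forces
`|g| = |2k + 1|`, i.e. `2k + 1 ∣ 2k' + 1`, and the quotient is the odd multiplier.
-/

/-- (p,q,k) is a generating triple of α -/
def GenTriple (α : ℝ) (p q k : ℤ) : Prop :=
  2 * (p : ℝ) * Real.sin α + 2 * (q : ℝ) * Real.cos α = 2 * (k : ℝ) + 1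

theorem Int.even_and_even_of_sq_add_sq_eq_four_mul_sq {X Y D : ℤ}
    (h : X ^ 2 + Y ^ 2 = 4 * D ^ 2) : Even X ∧ Even Y := by
  have sq_mod_four : ∀ Z : ℤ, Even Z ∧ Z ^ 2 % 4 = 0 ∨ Z ^ 2 % 4 = 1 := fun Z => by
    rcases Int.even_or_odd Z with ⟨z, rfl⟩ | hZ
    · refine .inl ⟨⟨z, rfl⟩, ?_⟩
      rw [show (z + z) ^ 2 = 4 * z ^ 2 by ring, Int.mul_emod_right]
    · exact .inr (Int.sq_mod_four_eq_one_of_odd hZ)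
  rcases sq_mod_four X with ⟨hX, hX4⟩ | hX4 <;> rcases sq_mod_four Y with ⟨hY, hY4⟩ | hY4
  · exact ⟨hX, hY⟩
  all_goals omega

theorem Int.eq_zero_of_sq_add_sq_eq_four_mul_sq_of_odd {p q a X Y D : ℤ} (ha : Odd a)
    (hsq : X ^ 2 + Y ^ 2 = 4 * D ^ 2) (hlin : p * X + q * Y = a * D) : D = 0 := by
  by_contra hD
  obtain ⟨⟨x, rfl⟩, ⟨y, rfl⟩⟩ := Int.even_and_even_of_sq_add_sq_eq_four_mul_sq hsq
  obtain ⟨d, rfl⟩ : 2 ∣ D := by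
    have h2 : (2 : ℤ) ∣ a * D := ⟨p * x + q * y, by linarith⟩
    exact (Int.prime_two.dvd_or_dvd h2).resolve_left
      (Int.not_even_iff_odd.2 ha ∘ even_iff_two_dvd.2)
  have : d = 0 := Int.eq_zero_of_sq_add_sq_eq_four_mul_sq_of_odd (p := p) (q := q) (X := x)
    (Y := y) ha (mul_left_cancel₀ four_ne_zero (by linear_combination hsq))
    (mul_left_cancel₀ two_ne_zero (by linear_combination hlin))
  omega
termination_by D.natAbs
decreasing_by omega

namespace GenTriple

variable {α : ℝ} {p q k p' q' k' : ℤ}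

theorem sq_add_sq_pos (h : GenTriple α p q k) : 0 < p ^ 2 + q ^ 2 := by
  by_contra! hle
  have hp : p = 0 := by nlinarith [sq_nonneg p, sq_nonneg q]
  have hq : q = 0 := by nlinarith [sq_nonneg p, sq_nonneg q]
  have : (2 * k + 1 : ℝ) = 0 := by simpa [GenTriple, hp, hq, eq_comm] using h
  have : (2 * k + 1 : ℤ) = 0 := by exact_mod_cast this
  omega

theorem combination (h : GenTriple α p q k) (h' : GenTriple α p' q' k') {x y m : ℤ}
    (hm : x * (2 * k + 1) + y * (2 * k' + 1) = 2 * m + 1) :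
    GenTriple α (x * p + y * p') (x * q + y * q') m := by
  have hmR : (x * (2 * k + 1) + y * (2 * k' + 1) : ℝ) = 2 * m + 1 := by exact_mod_cast hm
  unfold GenTriple at *
  push_cast
  linear_combination x * h + y * h' + hmR

theorem odd_mul (h : GenTriple α p q k) (n : ℤ) :
    GenTriple α ((2 * n + 1) * p) ((2 * n + 1) * q) ((2 * n + 1) * k + n) := by
  simpa using h.combination h (x := 2 * n + 1) (y := 0) (by ring)

theorem mul_eq_mul (h : GenTriple α p q k) (h' : GenTriple α p' q' k') : p * q' = q * p' := by
  unfold GenTriple at h h'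
  set D := p * q' - q * p'
  set X := (2 * k + 1) * q' - (2 * k' + 1) * q
  set Y := (2 * k' + 1) * p - (2 * k + 1) * p'
  have hX : (X : ℝ) = 2 * D * Real.sin α := by
    push_cast [X, D]
    linear_combination (q : ℝ) * h' - (q' : ℝ) * h
  have hY : (Y : ℝ) = 2 * D * Real.cos α := by
    push_cast [Y, D]
    linear_combination (p' : ℝ) * h - (p : ℝ) * h'
  have hsq : X ^ 2 + Y ^ 2 = 4 * D ^ 2 := by
    have : (X : ℝ) ^ 2 + Y ^ 2 = 4 * D ^ 2 := by
      rw [hX, hY]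
      linear_combination (4 * (D : ℝ) ^ 2) * Real.sin_sq_add_cos_sq α
    exact_mod_cast this
  have hlin : p * X + q * Y = (2 * k + 1) * D := by ring
  have hD0 := Int.eq_zero_of_sq_add_sq_eq_four_mul_sq_of_odd ⟨k, by ring⟩ hsq hlin
  linarith

theorem proportional (h : GenTriple α p q k) (h' : GenTriple α p' q' k') :
    p' * (2 * k + 1) = p * (2 * k' + 1) ∧ q' * (2 * k + 1) = q * (2 * k' + 1) := by
  have hD : (p * q' : ℝ) = q * p' := by exact_mod_cast h.mul_eq_mul h'
  unfold GenTriple at h h'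
  constructor
  · have : (p' * (2 * k + 1) : ℝ) = p * (2 * k' + 1) := by
      linear_combination (p : ℝ) * h' - (p' : ℝ) * h - 2 * Real.cos α * hD
    exact_mod_cast this
  · have : (q' * (2 * k + 1) : ℝ) = q * (2 * k' + 1) := by
      linear_combination (q : ℝ) * h' - (q' : ℝ) * h + 2 * Real.sin α * hD
    exact_mod_cast this

theorem dvd_of_minimal (h : GenTriple α p q k)
    (hmin : ∀ p' q' k' : ℤ, GenTriple α p' q' k' → p ^ 2 + q ^ 2 ≤ p' ^ 2 + q' ^ 2)
    (h' : GenTriple α p' q' k') : 2 * k + 1 ∣ 2 * k' + 1 := by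
  obtain ⟨hp, hq⟩ := h.proportional h'
  set a := 2 * k + 1 with ha
  set b := 2 * k' + 1
  set g : ℤ := (Int.gcd a b : ℤ)
  set x := Int.gcdA a b
  set y := Int.gcdB a b
  have hbezout : a * x + b * y = g := (Int.gcd_eq_gcd_ab a b).symm
  obtain ⟨m, hm⟩ : Odd g := by
    obtain ⟨c, hc⟩ := Int.gcd_dvd_left a b
    have hodd : Odd a := ⟨k, ha⟩
    rw [hc, Int.odd_mul] at hodd
    exact hodd.1
  have hcomb := h.combination h' (x := x) (y := y) (m := m) (by linarith)
  have hP : a * (x * p + y * p') = g * p := by linear_combination y * hp + p * hbezout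
  have hQ : a * (x * q + y * q') = g * q := by linear_combination y * hq + q * hbezout
  have hle : a ^ 2 ≤ g ^ 2 := by
    have hpos := h.sq_add_sq_pos
    have hscaled := mul_le_mul_of_nonneg_left (hmin _ _ _ hcomb) (sq_nonneg a)
    have hnorm :
        a ^ 2 * ((x * p + y * p') ^ 2 + (x * q + y * q') ^ 2) = g ^ 2 * (p ^ 2 + q ^ 2) := by
      linear_combination (a * (x * p + y * p') + g * p) * hP + (a * (x * q + y * q') + g * q) * hQ
    exact le_of_mul_le_mul_right (hnorm ▸ hscaled) hpos
  have hgcd : Int.gcd a b = a.natAbs :=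
    le_antisymm (Nat.le_of_dvd (by omega) (Int.gcd_dvd_natAbs_left a b))
      (by simpa [g] using Int.natAbs_le_iff_sq_le.2 hle)
  exact Int.gcd_eq_natAbs_left_iff_dvd.1 hgcd

end GenTriple

/-- the generating triples of a hinge angle are exactly the odd
multiples of a primary (norm-minimal) generating triple. -/
theorem generating_triples_classification (α : ℝ) (p q k : ℤ)
    (hgen : GenTriple α p q k)
    (hmin : ∀ p' q' k' : ℤ, GenTriple α p' q' k' → p ^ 2 + q ^ 2 ≤ p' ^ 2 + q' ^ 2) :
    ∀ p' q' k' : ℤ, GenTriple α p' q' k' ↔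
      ∃ n : ℤ, p' = (2 * n + 1) * p ∧ q' = (2 * n + 1) * q ∧ k' = (2 * n + 1) * k + n := by
  intro p' q' k'
  constructor
  · intro h'
    obtain ⟨hp, hq⟩ := hgen.proportional h'
    obtain ⟨m, hm⟩ := hgen.dvd_of_minimal hmin h'
    have hodd : Odd (2 * k' + 1) := ⟨k', rfl⟩
    rw [hm, Int.odd_mul] at hodd
    obtain ⟨n, rfl⟩ := hodd.2
    have ha : 2 * k + 1 ≠ 0 := by omega
    refine ⟨n, mul_right_cancel₀ ha ?_, mul_right_cancel₀ ha ?_, by linarith⟩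
    · rw [hp, hm]; ring
    · rw [hq, hm]; ring
  · rintro ⟨n, rfl, rfl, rfl⟩
    exact hgen.odd_mul n
end
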